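/- Signature interleaving: if ⊢ Σ,Σ' sig and ⊢ Σ,Ω sig and dom(Σ') ∩ dom(Ω) = ∅, then ⊢ Σ,Ω,Σ' sig. -/
import Mathlib


set_option maxHeartbeats 1000000

/-! ## Names -/

abbrev SortName := String
abbrev ConName := String
abbrev DataName := String
abbrev Var := String

/-! ## Types -/

inductive Ty : Type
  | unit : Ty
  | arr : Ty → Ty → Ty
  | prod : Ty → Ty → Ty
  | sort : SortName → Ty
  | inter : Ty → Ty → Ty
  deriving DecidableEq

inductive UTy : Type
  | unit : UTy
  | arr : UTy → UTy → UTy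
  | prod : UTy → UTy → UTy
  | data : DataName → UTy
  deriving DecidableEq

/-! ## Signatures -/

inductive Decl : Type
  | subsort : SortName → SortName → Decl
  | con : ConName → Ty → SortName → Decl
  deriving DecidableEq

structure Block : Type where
  sorts : List (SortName × DataName)
  decls : List Decl
  deriving DecidableEq

/-- A signature is a finite sequence of blocks (later blocks to the right). -/
abbrev Sig := List Block

def Block.domS (b : Block) : List SortName := b.sorts.map Prod.fst

def sigDom (Sgn : Sig) : List SortName := Sgn.foldr (fun b acc => b.domS ++ acc) []

def declaresSub (Sgn : Sig) (s1 s2 : SortName) : Prop :=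
  ∃ b ∈ Sgn, Decl.subsort s1 s2 ∈ b.decls

def declaresCon (Sgn : Sig) (c : ConName) (A : Ty) (s : SortName) : Prop :=
  ∃ b ∈ Sgn, Decl.con c A s ∈ b.decls

def declaresSort (Sgn : Sig) (s : SortName) (d : DataName) : Prop :=
  ∃ b ∈ Sgn, (s, d) ∈ b.sorts

/-! ## Subsorting and subtyping -/

inductive Subsort (Sgn : Sig) : SortName → SortName → Prop
  | assum {s1 s2} : declaresSub Sgn s1 s2 → Subsort Sgn s1 s2
  | refl {s} : s ∈ sigDom Sgn → Subsort Sgn s s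
  | trans {s1 s2 s3} : Subsort Sgn s1 s2 → Subsort Sgn s2 s3 → Subsort Sgn s1 s3

inductive Subty (Sgn : Sig) : Ty → Ty → Prop
  | unit : Subty Sgn .unit .unit
  | prod {A1 A2 B1 B2} : Subty Sgn A1 B1 → Subty Sgn A2 B2 →
      Subty Sgn (.prod A1 A2) (.prod B1 B2)
  | sort {s t} : Subsort Sgn s t → Subty Sgn (.sort s) (.sort t)
  | arr {A1 A2 B1 B2} : Subty Sgn B1 A1 → Subty Sgn A2 B2 →
      Subty Sgn (.arr A1 A2) (.arr B1 B2)
  | interL1 {A1 A2 B} : Subty Sgn A1 B → Subty Sgn (.inter A1 A2) B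
  | interL2 {A1 A2 B} : Subty Sgn A2 B → Subty Sgn (.inter A1 A2) B
  | interR {A B1 B2} : Subty Sgn A B1 → Subty Sgn A B2 → Subty Sgn A (.inter B1 B2)

/-! ## Unrefined signature, refinement, well-formedness -/

/-- The unrefined signature Ψ: each constructor has a unique typing c : τ → d. -/
structure UrSig : Type where
  cons : List (ConName × UTy × DataName)
  unique : ∀ c t1 d1 t2 d2, (c, t1, d1) ∈ cons → (c, t2, d2) ∈ cons → t1 = t2 ∧ d1 = d2

def UrSig.typing (Psi : UrSig) (c : ConName) (t : UTy) (d : DataName) : Prop :=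
  (c, t, d) ∈ Psi.cons

inductive Refines (Sgn : Sig) : Ty → UTy → Prop
  | unit : Refines Sgn .unit .unit
  | arr {A1 A2 t1 t2} : Refines Sgn A1 t1 → Refines Sgn A2 t2 →
      Refines Sgn (.arr A1 A2) (.arr t1 t2)
  | prod {A1 A2 t1 t2} : Refines Sgn A1 t1 → Refines Sgn A2 t2 →
      Refines Sgn (.prod A1 A2) (.prod t1 t2)
  | sort {s d} : declaresSort Sgn s d → Refines Sgn (.sort s) (.data d)
  | inter {A1 A2 t} : Refines Sgn A1 t → Refines Sgn A2 t → Refines Sgn (.inter A1 A2) t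

inductive TypeWF (Sgn : Sig) : Ty → Prop
  | unit : TypeWF Sgn .unit
  | arr {A1 A2} : TypeWF Sgn A1 → TypeWF Sgn A2 → TypeWF Sgn (.arr A1 A2)
  | prod {A1 A2} : TypeWF Sgn A1 → TypeWF Sgn A2 → TypeWF Sgn (.prod A1 A2)
  | sort {s} : s ∈ sigDom Sgn → TypeWF Sgn (.sort s)
  | inter {A1 A2 t} : TypeWF Sgn A1 → TypeWF Sgn A2 →
      Refines Sgn A1 t → Refines Sgn A2 t → TypeWF Sgn (.inter A1 A2)

/-- Σ ⊢ c : A → s contype. -/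
def ConTypeWF (Psi : UrSig) (Sgn : Sig) (c : ConName) (A : Ty) (s : SortName) : Prop :=
  TypeWF Sgn A ∧ TypeWF Sgn (.sort s) ∧
    ∃ t d, Psi.typing c t d ∧ Refines Sgn (.arr A (.sort s)) (.arr t (.data d))

/-- Constructor typing Σ ⊢ c : A → s. -/
def ConTyping (Sgn : Sig) (c : ConName) (A : Ty) (s : SortName) : Prop :=
  ∃ s', declaresCon Sgn c A s' ∧ Subsort Sgn s' s

/-! ## Signature well-formedness -/

/-- safe(Σ; blk; c : A→s at t). -/
def SafeConAt (Sgn : Sig) (blk : Block) (c : ConName) (A : Ty) (s t : SortName) : Prop :=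
  ∃ A' s', declaresCon Sgn c A' s' ∧ Subsort (Sgn ++ [blk]) s' t ∧
    Subsort (Sgn ++ [blk]) s s' ∧ Subty (Sgn ++ [blk]) A A'

/-- Σ; S ⊢ K ∋ elem safe, where the block blk is S⟨K⟩. -/
def ElemSafe (Psi : UrSig) (Sgn : Sig) (blk : Block) : Decl → Prop
  | .subsort s1 s2 =>
      (s1 ∈ sigDom Sgn ∨ s1 ∈ blk.domS) ∧ (s2 ∈ sigDom Sgn ∨ s2 ∈ blk.domS)
  | .con c A s =>
      s ∈ blk.domS ∧ ConTypeWF Psi (Sgn ++ [blk]) c A s ∧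
        ∀ t ∈ sigDom Sgn, Subsort (Sgn ++ [blk]) s t → SafeConAt Sgn blk c A s t

inductive SigWF (Psi : UrSig) : Sig → Prop
  | nil : SigWF Psi []
  | block {Sgn blk} :
      SigWF Psi Sgn →
      (∀ s ∈ blk.domS, s ∉ sigDom Sgn) →
      (∀ t1 ∈ sigDom Sgn, ∀ t2 ∈ sigDom Sgn,
        (Subsort Sgn t1 t2 ↔ Subsort (Sgn ++ [blk]) t1 t2)) →
      (∀ elem ∈ blk.decls, ElemSafe Psi Sgn blk elem) →
      SigWF Psi (Sgn ++ [blk])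

/-! ## Preservation of subsorting; non-adjacency; extension -/

/-- Σ' preserves subsorting of Σ. -/
def PreservesSub (Sgn Sgn' : Sig) : Prop :=
  ∀ s ∈ sigDom Sgn, ∀ t ∈ sigDom Sgn, Subsort (Sgn ++ Sgn') s t → Subsort Sgn s t

def Ty.sortsOf : Ty → List SortName
  | .unit => []
  | .arr A B => A.sortsOf ++ B.sortsOf
  | .prod A B => A.sortsOf ++ B.sortsOf
  | .sort s => [s]
  | .inter A B => A.sortsOf ++ B.sortsOf

def Decl.mentions : Decl → List SortName
  | .subsort s1 s2 => [s1, s2]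
  | .con _ A s => A.sortsOf ++ [s]

def Block.mentions (b : Block) : List SortName :=
  b.decls.foldr (fun d acc => d.mentions ++ acc) []

def sigMentions (Sgn : Sig) : List SortName :=
  Sgn.foldr (fun b acc => b.mentions ++ acc) []

/-- Two signature parts are non-adjacent if no declaration of either mentions
a sort declared by the other. -/
def NonAdjacent (Sg1 Sg2 : Sig) : Prop :=
  (∀ s ∈ sigMentions Sg1, s ∉ sigDom Sg2) ∧ (∀ s ∈ sigMentions Sg2, s ∉ sigDom Sg1)

/-- Σ₊ extends Σ (Σ₊ ≽ Σ): the block sequence of Σ is a subsequence of that of Σ₊. -/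
def SigExtends (Sgp Sgn : Sig) : Prop := List.Sublist Sgn Sgp

/-! ## Patterns -/

inductive Pat : Type
  | wild : Pat
  | empty : Pat
  | con : ConName → Pat → Pat
  | pair : Pat → Pat → Pat
  | as_ : Var → Pat → Pat
  | or : Pat → Pat → Pat
  | unit : Pat
  deriving DecidableEq

def Pat.boundVars : Pat → List Var
  | .wild => []
  | .empty => []
  | .unit => []
  | .con _ p => p.boundVars
  | .pair p1 p2 => p1.boundVars ++ p2.boundVars
  | .as_ x p => x :: p.boundVars
  | .or p1 p2 => p1.boundVars ++ p2.boundVars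

/-- Partial pattern intersection p₁ ∩ p₂. -/
def pinter : Pat → Pat → Option Pat
  | .empty, _ => some .empty
  | p, .empty =>
      match p with
      | _ => some .empty
  | .wild, p => some p
  | p, .wild => some p
  | .or p1 p2, p => do
      let q1 ← pinter p1 p
      let q2 ← pinter p2 p
      pure (.or q1 q2)
  | p, .or p1 p2 => do
      let q1 ← pinter p p1
      let q2 ← pinter p p2
      pure (.or q1 q2)
  | .con c1 p1, .con c2 p2 =>
      if c1 = c2 then (pinter p1 p2).map (Pat.con c1) else some .empty
  | .pair _ _, .con _ _ => some .empty
  | .con _ _, .pair _ _ => some .empty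
  | .pair p11 p12, .pair p21 p22 => do
      let q1 ← pinter p11 p21
      let q2 ← pinter p12 p22
      pure (.pair q1 q2)
  | _, _ => none

/-- The constructors of Ψ other than c. -/
def otherCons (Psi : UrSig) (c : ConName) : List ConName :=
  ((Psi.cons.map (fun x => x.1)).filter (fun c' => c' ≠ c)).dedup

/-- Pattern complement ¬p, relative to Ψ (partial). -/
def pcomp (Psi : UrSig) : Pat → Option Pat
  | .wild => some .empty
  | .empty => some .wild
  | .as_ _ p => pcomp Psi p
  | .pair p1 p2 => do
      let q1 ← pcomp Psi p1
      let q2 ← pcomp Psi p2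
      pure (.or (.pair q1 .wild) (.pair .wild q2))
  | .or p1 p2 => do
      let q1 ← pcomp Psi p1
      let q2 ← pcomp Psi p2
      pinter q1 q2
  | .con c p => do
      let q ← pcomp Psi p
      pure ((otherCons Psi c).foldl (fun acc c' => Pat.or acc (Pat.con c' .wild)) (Pat.con c q))
  | .unit => none

/-- Pattern typing Ψ ⊢ p : τ. -/
inductive PatType (Psi : UrSig) : Pat → UTy → Prop
  | wild {t} : PatType Psi .wild t
  | empty {t} : PatType Psi .empty t
  | as_ {x p t} : PatType Psi p t → PatType Psi (.as_ x p) t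
  | unit : PatType Psi .unit .unit
  | or {p1 p2 t} : PatType Psi p1 t → PatType Psi p2 t → PatType Psi (.or p1 p2) t
  | pair {p1 p2 t1 t2} : PatType Psi p1 t1 → PatType Psi p2 t2 →
      PatType Psi (.pair p1 p2) (.prod t1 t2)
  | con {c p t d} : Psi.typing c t d → PatType Psi p t → PatType Psi (.con c p) (.data d)

/-! ## Contexts and the intersect function -/

abbrev Ctx := List (Var × Ty)

/-- Membership in intersect(Σ; A; p): (Γ'; B) is a track of the intersection of A with p. -/
inductive InIntersect (Sgn : Sig) : Pat → Ty → Ctx → Ty → Prop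
  | wild {A} : InIntersect Sgn .wild A [] A
  | as_ {x p A G B} : InIntersect Sgn p A G B →
      InIntersect Sgn (.as_ x p) A (G ++ [(x, B)]) B
  | or1 {p1 p2 A G B} : InIntersect Sgn p1 A G B → InIntersect Sgn (.or p1 p2) A G B
  | or2 {p1 p2 A G B} : InIntersect Sgn p2 A G B → InIntersect Sgn (.or p1 p2) A G B
  | pair {p1 p2 A1 A2 G1 G2 B1 B2} :
      InIntersect Sgn p1 A1 G1 B1 → InIntersect Sgn p2 A2 G2 B2 →
      InIntersect Sgn (.pair p1 p2) (.prod A1 A2) (G1 ++ G2) (.prod B1 B2)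
  | con {c p0 Ac sc s G B} : declaresCon Sgn c Ac sc → Subsort Sgn sc s →
      InIntersect Sgn p0 Ac G B → InIntersect Sgn (.con c p0) (.sort s) G (.sort sc)

/-- intersect(Σ; A; p), as a set of tracks. -/
def intersect (Sgn : Sig) (A : Ty) (p : Pat) : Set (Ctx × Ty) :=
  { r | InIntersect Sgn p A r.1 r.2 }

/-- Σ ⊢ Γ₊ ≼ Γ : contexts declare the same variables in order, with pointwise subtyping. -/
def CtxStronger (Sgn : Sig) (Gp G : Ctx) : Prop :=
  List.Forall₂ (fun a b => a.1 = b.1 ∧ Subty Sgn a.2 b.2) Gp G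

/-- Σ ⊢ T₊ ≤trk T. -/
def TracksStronger (Sgn : Sig) (Tp T : Set (Ctx × Ty)) : Prop :=
  ∀ r ∈ Tp, ∃ r' ∈ T, CtxStronger Sgn r.1 r'.1 ∧ Subty Sgn r.2 r'.2

/-! ## Expressions -/

mutual
inductive Exp : Type
  | var : Var → Exp
  | lam : Var → Exp → Exp
  | app : Exp → Exp → Exp
  | pair : Exp → Exp → Exp
  | unit : Exp
  | con : ConName → Exp → Exp
  | case_ : Exp → Arms → Exp
  | declare : Sig → Exp → Exp

inductive Arms : Type
  | nil : Arms
  | cons : Pat → Exp → Arms → Arms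
end

inductive IsValue : Exp → Prop
  | var {x} : IsValue (.var x)
  | lam {x e} : IsValue (.lam x e)
  | pair {v1 v2} : IsValue v1 → IsValue v2 → IsValue (.pair v1 v2)
  | unit : IsValue .unit
  | con {c v} : IsValue v → IsValue (.con c v)

/-! ## Substitution -/

mutual
def substE (v : Exp) (x : Var) : Exp → Exp
  | .var y => if y = x then v else .var y
  | .lam y e => if y = x then .lam y e else .lam y (substE v x e)
  | .app e1 e2 => .app (substE v x e1) (substE v x e2)
  | .pair e1 e2 => .pair (substE v x e1) (substE v x e2)
  | .unit => .unit
  | .con c e => .con c (substE v x e)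
  | .case_ e ms => .case_ (substE v x e) (substA v x ms)
  | .declare sg e => .declare sg (substE v x e)

def substA (v : Exp) (x : Var) : Arms → Arms
  | .nil => .nil
  | .cons p e ms =>
      .cons p (if x ∈ p.boundVars then e else substE v x e) (substA v x ms)
end

/-- Apply a substitution θ (a list of value/variable pairs). -/
def applySubst (th : List (Var × Exp)) (e : Exp) : Exp :=
  th.foldl (fun e xv => substE xv.2 xv.1 e) e

/-! ## Pattern matching -/

inductive Matches : Pat → Exp → List (Var × Exp) → Prop
  | wild {v} : Matches .wild v []
  | as_ {x p v th} : Matches p v th → Matches (.as_ x p) v (th ++ [(x, v)])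
  | or1 {p1 p2 v th} : Matches p1 v th → Matches (.or p1 p2) v th
  | or2 {p1 p2 v th} : Matches p2 v th → Matches (.or p1 p2) v th
  | con {c p v th} : Matches p v th → Matches (.con c p) (.con c v) th
  | unit : Matches .unit .unit []
  | pair {p1 p2 v1 v2 th1 th2} : Matches p1 v1 th1 → Matches p2 v2 th2 →
      Matches (.pair p1 p2) (.pair v1 v2) (th1 ++ th2)

inductive NoMatch : Exp → Pat → Prop
  | empty {v} : NoMatch v .empty
  | as_ {v x p} : NoMatch v p → NoMatch v (.as_ x p)
  | or {v p1 p2} : NoMatch v p1 → NoMatch v p2 → NoMatch v (.or p1 p2)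
  | conHead {v c p} : (∀ v', v ≠ .con c v') → NoMatch v (.con c p)
  | conInner {c v p} : NoMatch v p → NoMatch (.con c v) (.con c p)
  | unit {v} : v ≠ .unit → NoMatch v .unit
  | pairHead {v p1 p2} : (∀ v1 v2, v ≠ .pair v1 v2) → NoMatch v (.pair p1 p2)
  | pair1 {v1 v2 p1 p2} : NoMatch v1 p1 → NoMatch (.pair v1 v2) (.pair p1 p2)
  | pair2 {v1 v2 p1 p2} : NoMatch v2 p2 → NoMatch (.pair v1 v2) (.pair p1 p2)

/-! ## Typing -/

mutual
/-- Σ; Γ ⊢ e : A (type assignment). -/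
inductive HasType (Psi : UrSig) : Sig → Ctx → Exp → Ty → Prop
  | var {Sgn G x A} : (x, A) ∈ G → HasType Psi Sgn G (.var x) A
  | sub {Sgn G e A B} : HasType Psi Sgn G e A → Subty Sgn A B → HasType Psi Sgn G e B
  | lam {Sgn G x e A B} : HasType Psi Sgn (G ++ [(x, A)]) e B →
      HasType Psi Sgn G (.lam x e) (.arr A B)
  | app {Sgn G e1 e2 A B} : HasType Psi Sgn G e1 (.arr A B) → HasType Psi Sgn G e2 A →
      HasType Psi Sgn G (.app e1 e2) B
  | inter {Sgn G v A1 A2} : IsValue v → HasType Psi Sgn G v A1 → HasType Psi Sgn G v A2 →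
      HasType Psi Sgn G v (.inter A1 A2)
  | pair {Sgn G e1 e2 A1 A2} : HasType Psi Sgn G e1 A1 → HasType Psi Sgn G e2 A2 →
      HasType Psi Sgn G (.pair e1 e2) (.prod A1 A2)
  | unit {Sgn G} : HasType Psi Sgn G .unit .unit
  | dataI {Sgn G c e A s} : ConTyping Sgn c A s → HasType Psi Sgn G e A →
      HasType Psi Sgn G (.con c e) (.sort s)
  | dataE {Sgn G e ms A B} : HasType Psi Sgn G e A → MatchType Psi Sgn G A .wild ms B →
      HasType Psi Sgn G (.case_ e ms) B
  | declare {Sgn Sg' G e B} : SigWF Psi (Sgn ++ Sg') → TypeWF Sgn B →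
      HasType Psi (Sgn ++ Sg') G e B → HasType Psi Sgn G (.declare Sg' e) B

/-- Σ; Γ; A; p ⊢ ms : D (match typing, with residual pattern p). -/
inductive MatchType (Psi : UrSig) : Sig → Ctx → Ty → Pat → Arms → Ty → Prop
  | nil {Sgn G A p D} : intersect Sgn A p = (∅ : Set (Ctx × Ty)) →
      MatchType Psi Sgn G A p .nil D
  | cons {Sgn G A p p1 e1 ms D t q np1 q'} :
      Refines Sgn A t → PatType Psi p1 t →
      pinter p p1 = some q →
      (∀ G' B, (G', B) ∈ intersect Sgn A q → HasType Psi Sgn (G ++ G') e1 D) →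
      pcomp Psi p1 = some np1 →
      pinter p np1 = some q' →
      MatchType Psi Sgn G A q' ms D →
      MatchType Psi Sgn G A p (.cons p1 e1 ms) D
end

/-- Substitution typing Σ; Γ ⊢ θ : Γ'. -/
inductive SubstType (Psi : UrSig) (Sgn : Sig) (G : Ctx) : List (Var × Exp) → Ctx → Prop
  | nil : SubstType Psi Sgn G [] []
  | cons {th G' v x A} : SubstType Psi Sgn G th G' → IsValue v → HasType Psi Sgn G v A →
      SubstType Psi Sgn G (th ++ [(x, v)]) (G' ++ [(x, A)])

/-! ## Operational semantics -/

inductive ArmsStep (v : Exp) : Arms → Exp → Prop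
  | match_ {p1 e1 ms th} : Matches p1 v th → ArmsStep v (.cons p1 e1 ms) (applySubst th e1)
  | else_ {p1 e1 ms e'} : NoMatch v p1 → ArmsStep v ms e' → ArmsStep v (.cons p1 e1 ms) e'

inductive Step : Exp → Exp → Prop
  | beta {x e v} : IsValue v → Step (.app (.lam x e) v) (substE v x e)
  | declare {sg e} : Step (.declare sg e) e
  | case_ {v ms e'} : IsValue v → ArmsStep v ms e' → Step (.case_ v ms) e'
  | appL {e1 e1' e2} : Step e1 e1' → Step (.app e1 e2) (.app e1' e2)
  | appR {v e2 e2'} : IsValue v → Step e2 e2' → Step (.app v e2) (.app v e2')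
  | conArg {c e e'} : Step e e' → Step (.con c e) (.con c e')
  | pairL {e1 e1' e2} : Step e1 e1' → Step (.pair e1 e2) (.pair e1' e2)
  | pairR {v e2 e2'} : IsValue v → Step e2 e2' → Step (.pair v e2) (.pair v e2')
  | caseScrut {e e' ms} : Step e e' → Step (.case_ e ms) (.case_ e' ms)

/-! ## Typing derivations in which every type is well-formed under the local signature -/

mutual
inductive HasTypeW (Psi : UrSig) : Sig → Ctx → Exp → Ty → Prop
  | var {Sgn G x A} : (x, A) ∈ G → TypeWF Sgn A → HasTypeW Psi Sgn G (.var x) A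
  | sub {Sgn G e A B} : HasTypeW Psi Sgn G e A → Subty Sgn A B → TypeWF Sgn B →
      HasTypeW Psi Sgn G e B
  | lam {Sgn G x e A B} : TypeWF Sgn (.arr A B) → HasTypeW Psi Sgn (G ++ [(x, A)]) e B →
      HasTypeW Psi Sgn G (.lam x e) (.arr A B)
  | app {Sgn G e1 e2 A B} : HasTypeW Psi Sgn G e1 (.arr A B) → HasTypeW Psi Sgn G e2 A →
      HasTypeW Psi Sgn G (.app e1 e2) B
  | inter {Sgn G v A1 A2} : IsValue v → TypeWF Sgn (.inter A1 A2) →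
      HasTypeW Psi Sgn G v A1 → HasTypeW Psi Sgn G v A2 →
      HasTypeW Psi Sgn G v (.inter A1 A2)
  | pair {Sgn G e1 e2 A1 A2} : HasTypeW Psi Sgn G e1 A1 → HasTypeW Psi Sgn G e2 A2 →
      HasTypeW Psi Sgn G (.pair e1 e2) (.prod A1 A2)
  | unit {Sgn G} : HasTypeW Psi Sgn G .unit .unit
  | dataI {Sgn G c e A s} : ConTyping Sgn c A s → TypeWF Sgn A → TypeWF Sgn (.sort s) →
      HasTypeW Psi Sgn G e A → HasTypeW Psi Sgn G (.con c e) (.sort s)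
  | dataE {Sgn G e ms A B} : HasTypeW Psi Sgn G e A → TypeWF Sgn A → TypeWF Sgn B →
      MatchTypeW Psi Sgn G A .wild ms B → HasTypeW Psi Sgn G (.case_ e ms) B
  | declare {Sgn Sg' G e B} : SigWF Psi (Sgn ++ Sg') → TypeWF Sgn B →
      HasTypeW Psi (Sgn ++ Sg') G e B → HasTypeW Psi Sgn G (.declare Sg' e) B

inductive MatchTypeW (Psi : UrSig) : Sig → Ctx → Ty → Pat → Arms → Ty → Prop
  | nil {Sgn G A p D} : intersect Sgn A p = (∅ : Set (Ctx × Ty)) →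
      MatchTypeW Psi Sgn G A p .nil D
  | cons {Sgn G A p p1 e1 ms D t q np1 q'} :
      Refines Sgn A t → PatType Psi p1 t →
      pinter p p1 = some q →
      (∀ G' B, (G', B) ∈ intersect Sgn A q → HasTypeW Psi Sgn (G ++ G') e1 D) →
      pcomp Psi p1 = some np1 →
      pinter p np1 = some q' →
      MatchTypeW Psi Sgn G A q' ms D →
      MatchTypeW Psi Sgn G A p (.cons p1 e1 ms) D
end

/-! ## Annotated expressions and the bidirectional system -/

mutual
inductive AExp : Type
  | var : Var → AExp
  | lam : Var → AExp → AExp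
  | app : AExp → AExp → AExp
  | pair : AExp → AExp → AExp
  | unit : AExp
  | con : ConName → AExp → AExp
  | case_ : AExp → AArms → AExp
  | declare : Sig → AExp → AExp
  | anno : AExp → List Ty → AExp

inductive AArms : Type
  | nil : AArms
  | cons : Pat → AExp → AArms → AArms
end

inductive IsAValue : AExp → Prop
  | var {x} : IsAValue (.var x)
  | lam {x e} : IsAValue (.lam x e)
  | pair {v1 v2} : IsAValue v1 → IsAValue v2 → IsAValue (.pair v1 v2)
  | unit : IsAValue .unit
  | con {c v} : IsAValue v → IsAValue (.con c v)
  | anno {v As} : IsAValue v → IsAValue (.anno v As)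

mutual
/-- |e|: erase all annotations. -/
def eraseE : AExp → Exp
  | .var x => .var x
  | .lam x e => .lam x (eraseE e)
  | .app e1 e2 => .app (eraseE e1) (eraseE e2)
  | .pair e1 e2 => .pair (eraseE e1) (eraseE e2)
  | .unit => .unit
  | .con c e => .con c (eraseE e)
  | .case_ e ms => .case_ (eraseE e) (eraseA ms)
  | .declare sg e => .declare sg (eraseE e)
  | .anno e _ => eraseE e

def eraseA : AArms → Arms
  | .nil => .nil
  | .cons p e ms => .cons p (eraseE e) (eraseA ms)
end

mutual
/-- Σ; Γ ⊢ e ⇐ A (checking). -/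
inductive Chk (Psi : UrSig) : Sig → Ctx → AExp → Ty → Prop
  | sub {Sgn G e A B} : Syn Psi Sgn G e A → Subty Sgn A B → Chk Psi Sgn G e B
  | lam {Sgn G x e A B} : Chk Psi Sgn (G ++ [(x, A)]) e B →
      Chk Psi Sgn G (.lam x e) (.arr A B)
  | inter {Sgn G v A1 A2} : IsAValue v → Chk Psi Sgn G v A1 → Chk Psi Sgn G v A2 →
      Chk Psi Sgn G v (.inter A1 A2)
  | pair {Sgn G e1 e2 A1 A2} : Chk Psi Sgn G e1 A1 → Chk Psi Sgn G e2 A2 →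
      Chk Psi Sgn G (.pair e1 e2) (.prod A1 A2)
  | unit {Sgn G} : Chk Psi Sgn G .unit .unit
  | dataI {Sgn G c e A s} : ConTyping Sgn c A s → Chk Psi Sgn G e A →
      Chk Psi Sgn G (.con c e) (.sort s)
  | dataE {Sgn G e ms A B} : Syn Psi Sgn G e A → MatchChk Psi Sgn G A .wild ms B →
      Chk Psi Sgn G (.case_ e ms) B
  | declare {Sgn Sg' G e B} : SigWF Psi (Sgn ++ Sg') → TypeWF Sgn B →
      Chk Psi (Sgn ++ Sg') G e B → Chk Psi Sgn G (.declare Sg' e) B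

/-- Σ; Γ ⊢ e ⇒ A (synthesis). -/
inductive Syn (Psi : UrSig) : Sig → Ctx → AExp → Ty → Prop
  | var {Sgn G x A} : (x, A) ∈ G → Syn Psi Sgn G (.var x) A
  | anno {Sgn G e As A} : A ∈ As → Chk Psi Sgn G e A → Syn Psi Sgn G (.anno e As) A
  | app {Sgn G e1 e2 A B} : Syn Psi Sgn G e1 (.arr A B) → Chk Psi Sgn G e2 A →
      Syn Psi Sgn G (.app e1 e2) B
  | interE1 {Sgn G e A1 A2} : Syn Psi Sgn G e (.inter A1 A2) → Syn Psi Sgn G e A1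
  | interE2 {Sgn G e A1 A2} : Syn Psi Sgn G e (.inter A1 A2) → Syn Psi Sgn G e A2

/-- Σ; Γ; A; p ⊢ ms ⇐ B (bidirectional match typing). -/
inductive MatchChk (Psi : UrSig) : Sig → Ctx → Ty → Pat → AArms → Ty → Prop
  | nil {Sgn G A p D} : intersect Sgn A p = (∅ : Set (Ctx × Ty)) →
      MatchChk Psi Sgn G A p .nil D
  | cons {Sgn G A p p1 e1 ms D t q np1 q'} :
      Refines Sgn A t → PatType Psi p1 t →
      pinter p p1 = some q →
      (∀ G' B, (G', B) ∈ intersect Sgn A q → Chk Psi Sgn (G ++ G') e1 D) →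
      pcomp Psi p1 = some np1 →
      pinter p np1 = some q' →
      MatchChk Psi Sgn G A q' ms D →
      MatchChk Psi Sgn G A p (.cons p1 e1 ms) D
end
/-! ## Auxiliary lemmas for signature interleaving -/

lemma sigDom_cons (b : Block) (S : Sig) : sigDom (b :: S) = b.domS ++ sigDom S := rfl

lemma sigDom_append (X Y : Sig) : sigDom (X ++ Y) = sigDom X ++ sigDom Y := by
  induction X with
  | nil => rfl
  | cons b X ih => simp [sigDom_cons, ih]

lemma mem_sigDom {s : SortName} {S : Sig} : s ∈ sigDom S ↔ ∃ b ∈ S, s ∈ b.domS := by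
  induction S with
  | nil => simp [sigDom]
  | cons b S ih => simp [sigDom_cons, ih]

lemma sigDom_mono {S1 S2 : Sig} (h : ∀ b ∈ S1, b ∈ S2) {s : SortName}
    (hs : s ∈ sigDom S1) : s ∈ sigDom S2 := by
  rw [mem_sigDom] at *
  obtain ⟨b, hb, hsb⟩ := hs
  exact ⟨b, h b hb, hsb⟩

lemma declaresSub_mono {S1 S2 : Sig} (h : ∀ b ∈ S1, b ∈ S2) {s t : SortName}
    (hd : declaresSub S1 s t) : declaresSub S2 s t := by
  obtain ⟨b, hb, hm⟩ := hd; exact ⟨b, h b hb, hm⟩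

lemma declaresCon_mono {S1 S2 : Sig} (h : ∀ b ∈ S1, b ∈ S2) {c A s}
    (hd : declaresCon S1 c A s) : declaresCon S2 c A s := by
  obtain ⟨b, hb, hm⟩ := hd; exact ⟨b, h b hb, hm⟩

lemma declaresSort_mono {S1 S2 : Sig} (h : ∀ b ∈ S1, b ∈ S2) {s d}
    (hd : declaresSort S1 s d) : declaresSort S2 s d := by
  obtain ⟨b, hb, hm⟩ := hd; exact ⟨b, h b hb, hm⟩

lemma subsort_mono {S1 S2 : Sig} (h : ∀ b ∈ S1, b ∈ S2) {s t : SortName}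
    (hd : Subsort S1 s t) : Subsort S2 s t := by
  induction hd with
  | assum hd => exact .assum (declaresSub_mono h hd)
  | refl hs => exact .refl (sigDom_mono h hs)
  | trans _ _ ih1 ih2 => exact .trans ih1 ih2

lemma subty_mono {S1 S2 : Sig} (h : ∀ b ∈ S1, b ∈ S2) {A B : Ty}
    (hd : Subty S1 A B) : Subty S2 A B := by
  induction hd with
  | unit => exact .unit
  | prod _ _ ih1 ih2 => exact .prod ih1 ih2
  | sort hs => exact .sort (subsort_mono h hs)
  | arr _ _ ih1 ih2 => exact .arr ih1 ih2
  | interL1 _ ih => exact .interL1 ih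
  | interL2 _ ih => exact .interL2 ih
  | interR _ _ ih1 ih2 => exact .interR ih1 ih2

lemma refines_mono {S1 S2 : Sig} (h : ∀ b ∈ S1, b ∈ S2) {A t}
    (hd : Refines S1 A t) : Refines S2 A t := by
  induction hd with
  | unit => exact .unit
  | arr _ _ ih1 ih2 => exact .arr ih1 ih2
  | prod _ _ ih1 ih2 => exact .prod ih1 ih2
  | sort hs => exact .sort (declaresSort_mono h hs)
  | inter _ _ ih1 ih2 => exact .inter ih1 ih2

lemma typeWF_mono {S1 S2 : Sig} (h : ∀ b ∈ S1, b ∈ S2) {A}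
    (hd : TypeWF S1 A) : TypeWF S2 A := by
  induction hd with
  | unit => exact .unit
  | arr _ _ ih1 ih2 => exact .arr ih1 ih2
  | prod _ _ ih1 ih2 => exact .prod ih1 ih2
  | sort hs => exact .sort (sigDom_mono h hs)
  | inter _ _ hr1 hr2 ih1 ih2 =>
      exact .inter ih1 ih2 (refines_mono h hr1) (refines_mono h hr2)

lemma conTypeWF_mono {Psi} {S1 S2 : Sig} (h : ∀ b ∈ S1, b ∈ S2) {c A s}
    (hd : ConTypeWF Psi S1 c A s) : ConTypeWF Psi S2 c A s := by
  obtain ⟨h1, h2, t, d, h4, h5⟩ := hd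
  exact ⟨typeWF_mono h h1, typeWF_mono h h2, t, d, h4, refines_mono h h5⟩

/-- Inversion of signature well-formedness at the last block. -/
lemma sigWF_snoc_inv {Psi : UrSig} {X : Sig} {b : Block} (h : SigWF Psi (X ++ [b])) :
    SigWF Psi X ∧ (∀ s ∈ b.domS, s ∉ sigDom X) ∧
    (∀ t1 ∈ sigDom X, ∀ t2 ∈ sigDom X,
      (Subsort X t1 t2 ↔ Subsort (X ++ [b]) t1 t2)) ∧
    (∀ elem ∈ b.decls, ElemSafe Psi X b elem) := by
  generalize hL : X ++ [b] = L at h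
  induction h with
  | nil => simp at hL
  | block hwf hfresh hpres hsafe ih =>
      obtain ⟨rfl, h2⟩ := List.append_inj' hL rfl
      obtain rfl : b = _ := by simpa using h2
      exact ⟨hwf, hfresh, hpres, hsafe⟩

/-- Restriction: subsorting in a well-formed signature, between sorts of a prefix,
holds in the prefix. -/
lemma subsort_restrict {Psi : UrSig} {X Y : Sig} (h : SigWF Psi (X ++ Y)) :
    ∀ t1 ∈ sigDom X, ∀ t2 ∈ sigDom X, Subsort (X ++ Y) t1 t2 → Subsort X t1 t2 := by
  induction Y using List.reverseRecOn with
  | nil => intro t1 _ t2 _ hs; simpa using hs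
  | append_singleton Y b ih =>
      rw [← List.append_assoc] at h
      obtain ⟨hwf, _, hpres, _⟩ := sigWF_snoc_inv h
      intro t1 ht1 t2 ht2 hs
      rw [← List.append_assoc] at hs
      have ht1' : t1 ∈ sigDom (X ++ Y) := by
        rw [sigDom_append]; exact List.mem_append_left _ ht1
      have ht2' : t2 ∈ sigDom (X ++ Y) := by
        rw [sigDom_append]; exact List.mem_append_left _ ht2
      exact ih hwf t1 ht1 t2 ht2 ((hpres t1 ht1' t2 ht2').mpr hs)

/-- In a well-formed signature, every declared subsorting has endpoints in the domain. -/
lemma declaresSub_dom {Psi : UrSig} {S : Sig} (h : SigWF Psi S) :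
    ∀ s t, declaresSub S s t → s ∈ sigDom S ∧ t ∈ sigDom S := by
  induction h with
  | nil => intro s t hd; obtain ⟨b, hb, _⟩ := hd; simp at hb
  | @block Sgn blk hwf hfresh hpres hsafe ih =>
      intro s t hd
      obtain ⟨b, hb, hm⟩ := hd
      rw [List.mem_append] at hb
      rcases hb with hb | hb
      · have := ih s t ⟨b, hb, hm⟩
        constructor <;> [exact sigDom_mono (fun b hb => List.mem_append_left _ hb) this.1;
          exact sigDom_mono (fun b hb => List.mem_append_left _ hb) this.2]
      · obtain rfl : b = blk := by simpa using hb
        have := hsafe _ hm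
        obtain ⟨hs, ht⟩ := this
        rw [sigDom_append]
        constructor
        · rcases hs with hs | hs
          · exact List.mem_append_left _ hs
          · exact List.mem_append_right _ (by simpa [sigDom_cons, sigDom] using hs)
        · rcases ht with ht | ht
          · exact List.mem_append_left _ ht
          · exact List.mem_append_right _ (by simpa [sigDom_cons, sigDom] using ht)

lemma subsort_dom {Psi : UrSig} {S : Sig} (h : SigWF Psi S) {s t}
    (hs : Subsort S s t) : s ∈ sigDom S ∧ t ∈ sigDom S := by
  induction hs with
  | assum hd => exact declaresSub_dom h _ _ hd
  | refl hm => exact ⟨hm, hm⟩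
  | trans _ _ ih1 ih2 => exact ⟨ih1.1, ih2.2⟩

/-- Domains of distinct parts of a well-formed signature are disjoint. -/
lemma sigWF_dom_disjoint {Psi : UrSig} {X Y : Sig} (h : SigWF Psi (X ++ Y)) :
    ∀ s ∈ sigDom Y, s ∉ sigDom X := by
  induction Y using List.reverseRecOn with
  | nil => simp [sigDom]
  | append_singleton Y b ih =>
      rw [← List.append_assoc] at h
      obtain ⟨hwf, hfresh, _, _⟩ := sigWF_snoc_inv h
      intro s hs
      rw [sigDom_append, List.mem_append] at hs
      rcases hs with hs | hs
      · exact ih hwf s hs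
      · have : s ∈ b.domS := by simpa [sigDom_cons, sigDom] using hs
        intro hX
        exact hfresh s this (by rw [sigDom_append]; exact List.mem_append_left _ hX)

/-- Path decomposition for subsorting in a union of two signatures overlapping on V0. -/
lemma subsort_decomp {S1 S2 big : Sig} {V0 : SortName → Prop}
    (hedge : ∀ s t, declaresSub big s t → declaresSub S1 s t ∨ declaresSub S2 s t)
    (hdom : ∀ s, s ∈ sigDom big → s ∈ sigDom S1 ∨ s ∈ sigDom S2)
    (hv1 : ∀ s t, Subsort S1 s t → s ∈ sigDom S1 ∧ t ∈ sigDom S1)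
    (hv2 : ∀ s t, Subsort S2 s t → s ∈ sigDom S2 ∧ t ∈ sigDom S2)
    (hint : ∀ s, s ∈ sigDom S1 → s ∈ sigDom S2 → V0 s)
    (hc1 : ∀ u v, V0 u → V0 v → Subsort S1 u v → Subsort S2 u v)
    (hc2 : ∀ u v, V0 u → V0 v → Subsort S2 u v → Subsort S1 u v)
    {s t} (h : Subsort big s t) :
    Subsort S1 s t ∨ Subsort S2 s t ∨
    (∃ u, V0 u ∧ Subsort S1 s u ∧ Subsort S2 u t) ∨
    (∃ u, V0 u ∧ Subsort S2 s u ∧ Subsort S1 u t) := by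
  induction h with
  | assum hd =>
      rcases hedge _ _ hd with hd | hd
      · exact Or.inl (.assum hd)
      · exact Or.inr (Or.inl (.assum hd))
  | refl hm =>
      rcases hdom _ hm with hm | hm
      · exact Or.inl (.refl hm)
      · exact Or.inr (Or.inl (.refl hm))
  | @trans s u t _ _ ih1 ih2 =>
      have V0mid : ∀ {a b c : SortName}, Subsort S1 a b → Subsort S2 b c → V0 b :=
        fun hab hbc => hint _ (hv1 _ _ hab).2 (hv2 _ _ hbc).1
      have V0mid' : ∀ {a b c : SortName}, Subsort S2 a b → Subsort S1 b c → V0 b :=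
        fun hab hbc => hint _ (hv1 _ _ hbc).1 (hv2 _ _ hab).2
      rcases ih1 with q1 | q1 | ⟨v, hv, qa, qb⟩ | ⟨v, hv, qa, qb⟩ <;>
        rcases ih2 with q2 | q2 | ⟨w, hw, qc, qd⟩ | ⟨w, hw, qc, qd⟩
      -- q1 : S1 s u
      · exact Or.inl (q1.trans q2)
      · exact Or.inr (Or.inr (Or.inl ⟨u, V0mid q1 q2, q1, q2⟩))
      · exact Or.inr (Or.inr (Or.inl ⟨w, hw, q1.trans qc, qd⟩))
      · have hu : V0 u := hint _ (hv1 _ _ q1).2 (hv2 _ _ qc).1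
        exact Or.inl ((q1.trans (hc2 _ _ hu hw qc)).trans qd)
      -- q1 : S2 s u
      · exact Or.inr (Or.inr (Or.inr ⟨u, V0mid' q1 q2, q1, q2⟩))
      · exact Or.inr (Or.inl (q1.trans q2))
      · have hu : V0 u := hint _ (hv1 _ _ qc).1 (hv2 _ _ q1).2
        exact Or.inr (Or.inl ((q1.trans (hc1 _ _ hu hw qc)).trans qd))
      · exact Or.inr (Or.inr (Or.inr ⟨w, hw, q1.trans qc, qd⟩))
      -- q1 : mixed3 via v : S1 s v, S2 v u
      · have hu : V0 u := hint _ (hv1 _ _ q2).1 (hv2 _ _ qb).2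
        exact Or.inl ((qa.trans (hc2 _ _ hv hu qb)).trans q2)
      · exact Or.inr (Or.inr (Or.inl ⟨v, hv, qa, qb.trans q2⟩))
      · have hu : V0 u := hint _ (hv1 _ _ qc).1 (hv2 _ _ qb).2
        exact Or.inr (Or.inr (Or.inl ⟨w, hw,
          (qa.trans (hc2 _ _ hv hu qb)).trans qc, qd⟩))
      · exact Or.inl ((qa.trans (hc2 _ _ hv hw (qb.trans qc))).trans qd)
      -- q1 : mixed4 via v : S2 s v, S1 v u
      · exact Or.inr (Or.inr (Or.inr ⟨v, hv, qa, qb.trans q2⟩))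
      · have hu : V0 u := hint _ (hv1 _ _ qb).2 (hv2 _ _ q2).1
        exact Or.inr (Or.inl ((qa.trans (hc1 _ _ hv hu qb)).trans q2))
      · exact Or.inr (Or.inl ((qa.trans (hc1 _ _ hv hw (qb.trans qc))).trans qd))
      · have hu : V0 u := hint _ (hv1 _ _ qb).2 (hv2 _ _ qc).1
        exact Or.inr (Or.inr (Or.inr ⟨w, hw,
          (qa.trans (hc1 _ _ hv hu qb)).trans qc, qd⟩))

lemma sigDom_singleton (b : Block) : sigDom [b] = b.domS := by simp [sigDom_cons, sigDom]

/-- **Signature interleaving** (Statement 1). -/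
theorem signature_interleaving (Psi : UrSig) (Sgn Sg' Om : Sig)
    (h1 : SigWF Psi (Sgn ++ Sg')) (h2 : SigWF Psi (Sgn ++ Om))
    (h3 : ∀ s ∈ sigDom Sg', s ∉ sigDom Om) :
    SigWF Psi (Sgn ++ Om ++ Sg') := by
  revert h1 h3
  induction Sg' using List.reverseRecOn with
  | nil => intro _ _; simpa using h2
  | append_singleton Sg'' blk ih =>
    intro h1 h3
    have h1' := h1
    rw [← List.append_assoc] at h1'
    rw [← List.append_assoc] at h1
    obtain ⟨hwf, hfresh, hpres, hsafe⟩ := sigWF_snoc_inv h1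
    rw [List.append_assoc] at h1'
    have h3' : ∀ s ∈ sigDom Sg'', s ∉ sigDom Om := by
      intro s hs
      exact h3 s (by rw [sigDom_append]; exact List.mem_append_left _ hs)
    have hblkOm : ∀ s ∈ blk.domS, s ∉ sigDom Om := by
      intro s hs
      refine h3 s ?_
      rw [sigDom_append]
      exact List.mem_append_right _ (by simpa [sigDom_singleton] using hs)
    have W2 : SigWF Psi (Sgn ++ Om ++ Sg'') := ih hwf h3'
    -- block inclusions
    have m1 : ∀ b ∈ Sgn ++ Sg'', b ∈ Sgn ++ Om ++ Sg'' := by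
      intro b hb; simp only [List.mem_append] at *; tauto
    have m2 : ∀ b ∈ (Sgn ++ Sg'') ++ [blk], b ∈ (Sgn ++ Om ++ Sg'') ++ [blk] := by
      intro b hb; simp only [List.mem_append] at *; tauto
    have m3 : ∀ b ∈ Sgn ++ Om, b ∈ (Sgn ++ Om ++ Sg'') ++ [blk] := by
      intro b hb; simp only [List.mem_append] at *; tauto
    have m4 : ∀ b ∈ Sgn ++ Om, b ∈ Sgn ++ Om ++ Sg'' := by
      intro b hb; simp only [List.mem_append] at *; tauto
    have m5 : ∀ b ∈ Sgn, b ∈ Sgn ++ Om := by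
      intro b hb; simp only [List.mem_append] at *; tauto
    have m6 : ∀ b ∈ Sgn, b ∈ (Sgn ++ Sg'') ++ [blk] := by
      intro b hb; simp only [List.mem_append] at *; tauto
    have m7 : ∀ b ∈ Sgn ++ Om ++ Sg'', b ∈ (Sgn ++ Om ++ Sg'') ++ [blk] := by
      intro b hb; simp only [List.mem_append] at *; tauto
    -- decomposition ingredients
    have hedge : ∀ s t, declaresSub ((Sgn ++ Om ++ Sg'') ++ [blk]) s t →
        declaresSub ((Sgn ++ Sg'') ++ [blk]) s t ∨ declaresSub (Sgn ++ Om) s t := by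
      rintro s t ⟨b, hb, hm⟩
      simp only [List.mem_append] at hb
      rcases hb with ((hb | hb) | hb) | hb
      · exact Or.inl ⟨b, by simp only [List.mem_append]; tauto, hm⟩
      · exact Or.inr ⟨b, by simp only [List.mem_append]; tauto, hm⟩
      · exact Or.inl ⟨b, by simp only [List.mem_append]; tauto, hm⟩
      · exact Or.inl ⟨b, by simp only [List.mem_append]; tauto, hm⟩
    have hdom : ∀ s, s ∈ sigDom ((Sgn ++ Om ++ Sg'') ++ [blk]) →
        s ∈ sigDom ((Sgn ++ Sg'') ++ [blk]) ∨ s ∈ sigDom (Sgn ++ Om) := by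
      intro s hs
      simp only [sigDom_append, sigDom_singleton, List.mem_append] at hs ⊢
      tauto
    have hv1 : ∀ s t, Subsort ((Sgn ++ Sg'') ++ [blk]) s t →
        s ∈ sigDom ((Sgn ++ Sg'') ++ [blk]) ∧ t ∈ sigDom ((Sgn ++ Sg'') ++ [blk]) :=
      fun _ _ h => subsort_dom h1 h
    have hv2 : ∀ s t, Subsort (Sgn ++ Om) s t →
        s ∈ sigDom (Sgn ++ Om) ∧ t ∈ sigDom (Sgn ++ Om) :=
      fun _ _ h => subsort_dom h2 h
    have hint : ∀ s, s ∈ sigDom ((Sgn ++ Sg'') ++ [blk]) → s ∈ sigDom (Sgn ++ Om) →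
        s ∈ sigDom Sgn := by
      intro s hs1 hs2
      simp only [sigDom_append, sigDom_singleton, List.mem_append] at hs1 hs2
      rcases hs2 with hs2 | hs2
      · exact hs2
      rcases hs1 with (hs1 | hs1) | hs1
      · exact hs1
      · exact (h3' s hs1 hs2).elim
      · exact (hblkOm s hs1 hs2).elim
    have hc1 : ∀ u v, u ∈ sigDom Sgn → v ∈ sigDom Sgn →
        Subsort ((Sgn ++ Sg'') ++ [blk]) u v → Subsort (Sgn ++ Om) u v := by
      intro u v hu hv hs
      rw [List.append_assoc] at hs
      exact subsort_mono m5 (subsort_restrict h1' u hu v hv hs)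
    have hc2 : ∀ u v, u ∈ sigDom Sgn → v ∈ sigDom Sgn →
        Subsort (Sgn ++ Om) u v → Subsort ((Sgn ++ Sg'') ++ [blk]) u v :=
      fun u v hu hv hs => subsort_mono m6 (subsort_restrict h2 u hu v hv hs)
    have decomp := fun {s t : SortName}
        (h : Subsort ((Sgn ++ Om ++ Sg'') ++ [blk]) s t) =>
      subsort_decomp hedge hdom hv1 hv2 hint hc1 hc2 h
    have toB1 : ∀ x, x ∈ sigDom (Sgn ++ Om ++ Sg'') →
        x ∈ sigDom ((Sgn ++ Sg'') ++ [blk]) → x ∈ sigDom (Sgn ++ Sg'') := by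
      intro x hx hx1
      simp only [sigDom_append, sigDom_singleton, List.mem_append] at hx hx1 ⊢
      rcases hx1 with hx1 | hx1
      · exact hx1
      rcases hx with (hx | hx) | hx
      · exact ((hfresh x hx1) (by rw [sigDom_append, List.mem_append]; exact Or.inl hx)).elim
      · exact (hblkOm x hx1 hx).elim
      · exact ((hfresh x hx1) (by rw [sigDom_append, List.mem_append]; exact Or.inr hx)).elim
    have blk_not_S2 : ∀ s ∈ blk.domS, s ∉ sigDom (Sgn ++ Om) := by
      intro s hs hmem
      rw [sigDom_append, List.mem_append] at hmem
      rcases hmem with hm | hm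
      · exact hfresh s hs (by rw [sigDom_append, List.mem_append]; exact Or.inl hm)
      · exact hblkOm s hs hm
    -- the three obligations of the block rule
    have Fresh : ∀ s ∈ blk.domS, s ∉ sigDom (Sgn ++ Om ++ Sg'') := by
      intro s hs hmem
      simp only [sigDom_append, List.mem_append] at hmem
      rcases hmem with (hm | hm) | hm
      · exact hfresh s hs (by rw [sigDom_append, List.mem_append]; exact Or.inl hm)
      · exact hblkOm s hs hm
      · exact hfresh s hs (by rw [sigDom_append, List.mem_append]; exact Or.inr hm)
    have Pres : ∀ t1 ∈ sigDom (Sgn ++ Om ++ Sg''), ∀ t2 ∈ sigDom (Sgn ++ Om ++ Sg''),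
        (Subsort (Sgn ++ Om ++ Sg'') t1 t2 ↔
          Subsort ((Sgn ++ Om ++ Sg'') ++ [blk]) t1 t2) := by
      intro t1 ht1 t2 ht2
      constructor
      · exact subsort_mono m7
      · intro hbig
        rcases decomp hbig with q | q | ⟨u, hu, qa, qb⟩ | ⟨u, hu, qa, qb⟩
        · have hb1 : t1 ∈ sigDom (Sgn ++ Sg'') := toB1 t1 ht1 (hv1 _ _ q).1
          have hb2 : t2 ∈ sigDom (Sgn ++ Sg'') := toB1 t2 ht2 (hv1 _ _ q).2
          exact subsort_mono m1 ((hpres t1 hb1 t2 hb2).mpr q)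
        · exact subsort_mono m4 q
        · have hb1 : t1 ∈ sigDom (Sgn ++ Sg'') := toB1 t1 ht1 (hv1 _ _ qa).1
          have hbu : u ∈ sigDom (Sgn ++ Sg'') := by
            rw [sigDom_append, List.mem_append]; exact Or.inl hu
          exact (subsort_mono m1 ((hpres t1 hb1 u hbu).mpr qa)).trans (subsort_mono m4 qb)
        · have hb2 : t2 ∈ sigDom (Sgn ++ Sg'') := toB1 t2 ht2 (hv1 _ _ qb).2
          have hbu : u ∈ sigDom (Sgn ++ Sg'') := by
            rw [sigDom_append, List.mem_append]; exact Or.inl hu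
          exact (subsort_mono m4 qa).trans (subsort_mono m1 ((hpres u hbu t2 hb2).mpr qb))
    have Safe : ∀ elem ∈ blk.decls, ElemSafe Psi (Sgn ++ Om ++ Sg'') blk elem := by
      intro elem helem
      have hE := hsafe elem helem
      cases elem with
      | subsort s1 s2 =>
        obtain ⟨hs1, hs2⟩ := hE
        constructor
        · rcases hs1 with hs | hs
          · exact Or.inl (sigDom_mono m1 hs)
          · exact Or.inr hs
        · rcases hs2 with hs | hs
          · exact Or.inl (sigDom_mono m1 hs)
          · exact Or.inr hs
      | con c A s =>
        obtain ⟨hsdom, hct, hsafety⟩ := hE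
        refine ⟨hsdom, conTypeWF_mono m2 hct, ?_⟩
        intro t ht hsub
        rcases decomp hsub with q | q | ⟨u, hu, qa, qb⟩ | ⟨u, hu, qa, qb⟩
        · have hbt : t ∈ sigDom (Sgn ++ Sg'') := toB1 t ht (hv1 _ _ q).2
          obtain ⟨A', s', hdc, hst, hss, hty⟩ := hsafety t hbt q
          exact ⟨A', s', declaresCon_mono m1 hdc, subsort_mono m2 hst,
            subsort_mono m2 hss, subty_mono m2 hty⟩
        · exact (blk_not_S2 s hsdom (hv2 _ _ q).1).elim
        · have hbu : u ∈ sigDom (Sgn ++ Sg'') := by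
            rw [sigDom_append, List.mem_append]; exact Or.inl hu
          obtain ⟨A', s', hdc, hst, hss, hty⟩ := hsafety u hbu qa
          exact ⟨A', s', declaresCon_mono m1 hdc,
            (subsort_mono m2 hst).trans (subsort_mono m3 qb),
            subsort_mono m2 hss, subty_mono m2 hty⟩
        · exact (blk_not_S2 s hsdom (hv2 _ _ qa).1).elim
    rw [← List.append_assoc]
    exact SigWF.block W2 Fresh Pres Safe
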